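/- arXiv:1506.01006 — 2 statements merged into one kernel-verified Lean document; each statement's English description precedes it below -/
import Mathlib

section
/- The principal symbol of the fourth-order operator 𝒜(ρ) satisfies σ[𝒜(ρ)](p,ξ) = 𝒢⁻² (((r+ρ)² + ρ_θ²)ξ₁² + (1+ρ_x²)ξ₂² - 2ρ_x ρ_θ ξ₁ξ₂)², and this quantity is bounded below by 𝒢⁻² ((r+ρ)²ξ₁² + ξ₂²)² for all ξ = (ξ₁,ξ₂) ∈ ℝ². -/
/-- the principal symbol of 𝒜(ρ) equals 𝒢⁻²(((r+ρ)²+ρθ²)ξ₁² + (1+ρx²)ξ₂² - 2ρxρθξ₁ξ₂)²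
and is bounded below by 𝒢⁻²((r+ρ)²ξ₁² + ξ₂²)². -/
theorem stmt1 (r ρ ρx ρθ : ℝ) (hr : 0 < r) (hρ : -r < ρ)
    (G : ℝ) (hG : G = (r + ρ) ^ 2 * (1 + ρx ^ 2) + ρθ ^ 2) (ξ1 ξ2 : ℝ) :
    (((r + ρ) ^ 2 + ρθ ^ 2) ^ 2 / G ^ 2) * ξ1 ^ 4
      + (-(4 * ρx * ρθ * ((r + ρ) ^ 2 + ρθ ^ 2)) / G ^ 2) * ξ1 ^ 3 * ξ2
      + ((2 * ((r + ρ) ^ 2 + ρθ ^ 2) * (1 + ρx ^ 2) + 4 * ρx ^ 2 * ρθ ^ 2) / G ^ 2)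
          * ξ1 ^ 2 * ξ2 ^ 2
      + (-(4 * ρx * ρθ * (1 + ρx ^ 2)) / G ^ 2) * ξ1 * ξ2 ^ 3
      + ((1 + ρx ^ 2) ^ 2 / G ^ 2) * ξ2 ^ 4
    = (G ^ 2)⁻¹ * (((r + ρ) ^ 2 + ρθ ^ 2) * ξ1 ^ 2 + (1 + ρx ^ 2) * ξ2 ^ 2
        - 2 * ρx * ρθ * ξ1 * ξ2) ^ 2 ∧
    (G ^ 2)⁻¹ * (((r + ρ) ^ 2 + ρθ ^ 2) * ξ1 ^ 2 + (1 + ρx ^ 2) * ξ2 ^ 2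
        - 2 * ρx * ρθ * ξ1 * ξ2) ^ 2
      ≥ (G ^ 2)⁻¹ * ((r + ρ) ^ 2 * ξ1 ^ 2 + ξ2 ^ 2) ^ 2 := by
  constructor
  · ring
  · have hB : (0:ℝ) ≤ (r + ρ) ^ 2 * ξ1 ^ 2 + ξ2 ^ 2 := by positivity
    have hA : ((r + ρ) ^ 2 + ρθ ^ 2) * ξ1 ^ 2 + (1 + ρx ^ 2) * ξ2 ^ 2
        - 2 * ρx * ρθ * ξ1 * ξ2
        = ((r + ρ) ^ 2 * ξ1 ^ 2 + ξ2 ^ 2) + (ρθ * ξ1 - ρx * ξ2) ^ 2 := by ring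
    have hle : (r + ρ) ^ 2 * ξ1 ^ 2 + ξ2 ^ 2
        ≤ ((r + ρ) ^ 2 + ρθ ^ 2) * ξ1 ^ 2 + (1 + ρx ^ 2) * ξ2 ^ 2
          - 2 * ρx * ρθ * ξ1 * ξ2 := by
      rw [hA]; nlinarith [sq_nonneg (ρθ * ξ1 - ρx * ξ2)]
    have := pow_le_pow_left₀ hB hle 2
    have hGnn : (0:ℝ) ≤ (G ^ 2)⁻¹ := by positivity
    exact mul_le_mul_of_nonneg_left this hGnn
end

section
/- For every ξ ∈ ℝ² with |ξ| = 1 and every ρ with ε - r < ρ ≤ M, |ρ_x|, |ρ_θ| ≤ M (for fixed ε > 0, M > 0), there exist constants 0 < c₁ ≤ c₂ (depending only on r, ε, M) such that c₁ ≤ 𝒢⁻² ((r+ρ)²ξ₁² + ξ₂²)² and 𝒢⁻² (((r+ρ)²+ρ_θ²)ξ₁² + (1+ρ_x²)ξ₂² - 2ρ_xρ_θ ξ₁ξ₂)² ≤ c₂; i.e., the operator 𝒜(ρ) is uniformly strongly elliptic. -/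
set_option maxHeartbeats 1000000

/-- uniform strong ellipticity of 𝒜(ρ): the principal symbol is bounded
above and below by positive constants depending only on r, ε, M, uniformly over
admissible ρ and unit covectors ξ. -/
theorem stmt2 (r ε M : ℝ) (hr : 0 < r) (hε : 0 < ε) (hM : 0 < M) :
    ∃ c1 c2 : ℝ, 0 < c1 ∧ c1 ≤ c2 ∧
      ∀ ρ ρx ρθ ξ1 ξ2 : ℝ, ε - r < ρ → ρ ≤ M → |ρx| ≤ M → |ρθ| ≤ M →
        ξ1 ^ 2 + ξ2 ^ 2 = 1 →
        (c1 ≤ ((((r + ρ) ^ 2 * (1 + ρx ^ 2) + ρθ ^ 2)) ^ 2)⁻¹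
                * ((r + ρ) ^ 2 * ξ1 ^ 2 + ξ2 ^ 2) ^ 2 ∧
         ((((r + ρ) ^ 2 * (1 + ρx ^ 2) + ρθ ^ 2)) ^ 2)⁻¹
                * (((r + ρ) ^ 2 + ρθ ^ 2) * ξ1 ^ 2 + (1 + ρx ^ 2) * ξ2 ^ 2
                    - 2 * ρx * ρθ * ξ1 * ξ2) ^ 2 ≤ c2) := by
  set B : ℝ := (r + M) ^ 2 * (1 + M ^ 2) + M ^ 2 with hBdef
  set m : ℝ := min (ε ^ 2) 1 with hmdef
  set A : ℝ := (r + M) ^ 2 + 4 * M ^ 2 + 1 with hAdef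
  have hB0 : 0 < B := by positivity
  have hm0 : 0 < m := lt_min (by positivity) one_pos
  have hA0 : 0 < A := by positivity
  have ha0 : 0 < m ^ 2 / B ^ 2 := by positivity
  have hb0 : 0 < A ^ 2 / ε ^ 4 := by positivity
  refine ⟨min (m ^ 2 / B ^ 2) (A ^ 2 / ε ^ 4), max (m ^ 2 / B ^ 2) (A ^ 2 / ε ^ 4),
    lt_min ha0 hb0, min_le_max, ?_⟩
  intro ρ ρx ρθ ξ1 ξ2 h1 h2 h3 h4 h5
  have hrρ : ε < r + ρ := by linarith
  have hrM : r + ρ ≤ r + M := by linarith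
  have hrρ0 : 0 < r + ρ := lt_trans hε hrρ
  have hx2 : ρx ^ 2 ≤ M ^ 2 := by
    have := abs_le.mp h3; nlinarith [this.1, this.2]
  have hθ2 : ρθ ^ 2 ≤ M ^ 2 := by
    have := abs_le.mp h4; nlinarith [this.1, this.2]
  have hξ1 : ξ1 ^ 2 ≤ 1 := by nlinarith [sq_nonneg ξ2]
  have hξ2 : ξ2 ^ 2 ≤ 1 := by nlinarith [sq_nonneg ξ1]
  have hsq : (r + ρ) ^ 2 ≤ (r + M) ^ 2 := by nlinarith
  have hε2 : ε ^ 2 ≤ (r + ρ) ^ 2 := by nlinarith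
  set G : ℝ := (r + ρ) ^ 2 * (1 + ρx ^ 2) + ρθ ^ 2 with hGdef
  have hG0 : 0 < G := by
    have h1' : 0 < (r + ρ) ^ 2 * (1 + ρx ^ 2) :=
      mul_pos (pow_pos hrρ0 2) (by positivity)
    rw [hGdef]; nlinarith [sq_nonneg ρθ]
  have hGB : G ≤ B := by
    have hmul : (r + ρ) ^ 2 * (1 + ρx ^ 2) ≤ (r + M) ^ 2 * (1 + M ^ 2) :=
      mul_le_mul hsq (by linarith) (by positivity) (by positivity)
    rw [hGdef, hBdef]; linarith
  have hGε : ε ^ 2 ≤ G := by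
    have h1' : (r + ρ) ^ 2 * 1 ≤ (r + ρ) ^ 2 * (1 + ρx ^ 2) :=
      mul_le_mul_of_nonneg_left (by nlinarith [sq_nonneg ρx]) (sq_nonneg _)
    rw [hGdef]; nlinarith [sq_nonneg ρθ]
  constructor
  · -- lower bound
    set P : ℝ := (r + ρ) ^ 2 * ξ1 ^ 2 + ξ2 ^ 2 with hPdef
    have hmP : m ≤ P := by
      have h1' : m ≤ ε ^ 2 := min_le_left _ _
      have h2' : m ≤ 1 := min_le_right _ _
      have a1 : m * ξ1 ^ 2 ≤ (r + ρ) ^ 2 * ξ1 ^ 2 :=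
        mul_le_mul_of_nonneg_right (le_trans h1' hε2) (sq_nonneg ξ1)
      have a2 : m * ξ2 ^ 2 ≤ 1 * ξ2 ^ 2 :=
        mul_le_mul_of_nonneg_right h2' (sq_nonneg ξ2)
      have hm' : m * ξ1 ^ 2 + m * ξ2 ^ 2 = m := by linear_combination m * h5
      rw [hPdef]; nlinarith
    have key : m ^ 2 / B ^ 2 ≤ P ^ 2 / G ^ 2 :=
      div_le_div₀ (by positivity) (pow_le_pow_left₀ hm0.le hmP 2) (by positivity)
        (pow_le_pow_left₀ hG0.le hGB 2)
    calc min (m ^ 2 / B ^ 2) (A ^ 2 / ε ^ 4) ≤ m ^ 2 / B ^ 2 := min_le_left _ _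
      _ ≤ P ^ 2 / G ^ 2 := key
      _ = (G ^ 2)⁻¹ * P ^ 2 := by rw [div_eq_inv_mul]
  · -- upper bound
    set Q : ℝ := ((r + ρ) ^ 2 + ρθ ^ 2) * ξ1 ^ 2 + (1 + ρx ^ 2) * ξ2 ^ 2
        - 2 * ρx * ρθ * ξ1 * ξ2 with hQdef
    have hQid : Q = (r + ρ) ^ 2 * ξ1 ^ 2 + ξ2 ^ 2 + (ρθ * ξ1 - ρx * ξ2) ^ 2 := by
      rw [hQdef]; ring
    have b1 : (r + ρ) ^ 2 * ξ1 ^ 2 ≤ (r + M) ^ 2 * 1 :=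
      mul_le_mul hsq hξ1 (sq_nonneg ξ1) (by positivity)
    have b2 : (ρθ * ξ1 - ρx * ξ2) ^ 2 ≤ 2 * (ρθ ^ 2 * ξ1 ^ 2) + 2 * (ρx ^ 2 * ξ2 ^ 2) := by
      nlinarith [sq_nonneg (ρθ * ξ1 + ρx * ξ2)]
    have b3 : ρθ ^ 2 * ξ1 ^ 2 ≤ M ^ 2 * 1 :=
      mul_le_mul hθ2 hξ1 (sq_nonneg ξ1) (by positivity)
    have b4 : ρx ^ 2 * ξ2 ^ 2 ≤ M ^ 2 * 1 :=
      mul_le_mul hx2 hξ2 (sq_nonneg ξ2) (by positivity)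
    have hQ0 : 0 ≤ Q := by
      rw [hQid]
      have := mul_nonneg (sq_nonneg (r + ρ)) (sq_nonneg ξ1)
      nlinarith [sq_nonneg (ρθ * ξ1 - ρx * ξ2), sq_nonneg ξ2]
    have hQA : Q ≤ A := by rw [hQid, hAdef]; linarith
    have hden : ε ^ 4 ≤ G ^ 2 := by nlinarith [hGε, pow_pos hε 2]
    have key : Q ^ 2 / G ^ 2 ≤ A ^ 2 / ε ^ 4 :=
      div_le_div₀ (by positivity) (pow_le_pow_left₀ hQ0 hQA 2) (by positivity) hden
    calc (G ^ 2)⁻¹ * Q ^ 2 = Q ^ 2 / G ^ 2 := by rw [div_eq_inv_mul]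
      _ ≤ A ^ 2 / ε ^ 4 := key
      _ ≤ max (m ^ 2 / B ^ 2) (A ^ 2 / ε ^ 4) := le_max_right _ _
end
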